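/- arXiv:1409.7409 — 6 statements merged into one kernel-verified Lean document; each statement's English description precedes it below -/
import Mathlib

section
/- For independent standard normal random variables X_1,...,X_n and real numbers a_1,...,a_n, the p-th moment E[(∑_i a_i X_i^2)^p] equals (p!/2^p) ∑_λ (∏_{k∈λ} binomial(2k,k)) m_λ(a_1,...,a_n), where the sum is over all integer partitions λ of p and m_λ is the monomial symmetric polynomial with exponent pattern λ. -/
/-!
Expanding `(∑ aᵢ Xᵢ²)^p` by the multinomial theorem and using independence, the moment is
`∑ₖ multinomial(k) ∏ aᵢ^kᵢ ∏ E[Xᵢ^(2kᵢ)]`, with `E[X^(2k)] = (2k-1)‼`. Since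
`2^k (2k-1)‼ = C(2k,k) k!`, the coefficient of `∏ aᵢ^kᵢ` is `p!/2^p ∏ C(2kᵢ,kᵢ)`, which depends on
`k` only through the multiset of its nonzero entries, a partition of `p`; grouping the tuples `k`
by this partition produces the monomial symmetric polynomials.
-/

open MeasureTheory ProbabilityTheory

/-- The value of the monomial symmetric polynomial `m_λ` at `a₁,…,aₙ`:
the sum of all distinct monomials whose multiset of (nonzero) exponents
equals the parts of the partition `λ`. -/
noncomputable def monomialSymValue {n p : ℕ} (lam : Nat.Partition p) (a : Fin n → ℝ) : ℝ :=
  ∑ k ∈ (Finset.Nat.antidiagonalTuple n p).filter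
      (fun k => (Finset.univ.val.map k).filter (fun m => 0 < m) = lam.parts),
    ∏ i, a i ^ k i

open Finset
open scoped Nat NNReal

lemma integral_pow_two_mul_gaussianReal (k : ℕ) :
    ∫ x, x ^ (2 * k) ∂gaussianReal 0 1 = (2 * k - 1)‼ := by
  rw [integral_gaussianReal_eq_integral_smul one_ne_zero]
  have hdens : ∀ x : ℝ, gaussianPDFReal 0 1 x • x ^ (2 * k)
      = (√(2 * Real.pi))⁻¹ * (|x| ^ ((2 * k : ℕ) : ℝ) * Real.exp (-(1 / 2) * |x| ^ (2 : ℝ))) := by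
    intro x
    rw [Real.rpow_natCast, Real.rpow_two, sq_abs, Even.pow_abs ⟨k, by ring⟩]
    simp only [gaussianPDFReal, NNReal.coe_one, mul_one, sub_zero, smul_eq_mul]
    ring_nf
  simp_rw [hdens]
  -- by symmetry the integral is twice a Gamma integral over `(0, ∞)`
  rw [integral_const_mul, integral_comp_abs
      (f := fun y => y ^ ((2 * k : ℕ) : ℝ) * Real.exp (-(1 / 2) * y ^ (2 : ℝ))),
    integral_rpow_mul_exp_neg_mul_rpow two_pos (neg_one_lt_zero.trans_le (Nat.cast_nonneg _))
      one_half_pos]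
  have hexp : (((2 * k : ℕ) : ℝ) + 1) / 2 = k + 1 / 2 := by push_cast; ring
  have hscale : ((1 : ℝ) / 2) ^ (-(((2 * k : ℕ) : ℝ) + 1) / 2) = 2 ^ k * √2 := by
    rw [neg_div, hexp, one_div, Real.inv_rpow zero_le_two, Real.rpow_neg zero_le_two, inv_inv,
      Real.rpow_add two_pos, Real.rpow_natCast, Real.sqrt_eq_rpow, one_div]
  rw [hscale, hexp, Real.Gamma_nat_add_half, Real.sqrt_mul zero_le_two]
  field_simp

lemma integrable_pow_gaussianReal (μ : ℝ) (v : ℝ≥0) (m : ℕ) :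
    Integrable (fun x => x ^ m) (gaussianReal μ v) :=
  integrable_pow_of_mem_interior_integrableExpSet (X := id)
    (by simp [integrableExpSet_id_gaussianReal]) m

namespace ProbabilityTheory

variable {Ω ι : Type*} [MeasurableSpace Ω] {μ : Measure Ω} [Fintype ι] {Y : ι → Ω → ℝ}

lemma iIndepFun.integrable_fun_prod (hY : iIndepFun Y μ) (hmeas : ∀ i, AEMeasurable (Y i) μ)
    (hint : ∀ i, Integrable (Y i) μ) : Integrable (fun ω => ∏ i, Y i ω) μ := by
  have := hY.isProbabilityMeasure
  have hprod : Integrable (fun y : ι → ℝ => ∏ i, y i) (μ.map fun ω i => Y i ω) := by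
    rw [hY.map_fun_eq_pi_map hmeas]
    exact Integrable.fintype_prod (f := fun _ y => y) fun i =>
      (integrable_map_measure aestronglyMeasurable_id (hmeas i)).mpr (hint i)
  exact (integrable_map_measure hprod.aestronglyMeasurable (by fun_prop)).mp hprod

lemma iIndepFun.integral_sum_mul_pow [DecidableEq ι] (hY : iIndepFun Y μ)
    (hmeas : ∀ i, Measurable (Y i)) (hint : ∀ i m, Integrable (fun ω => Y i ω ^ m) μ)
    (a : ι → ℝ) (p : ℕ) :
    ∫ ω, (∑ i, a i * Y i ω) ^ p ∂μ
      = ∑ k ∈ piAntidiag univ p,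
          Nat.multinomial univ k * (∏ i, a i ^ k i) * ∏ i, ∫ ω, Y i ω ^ k i ∂μ := by
  have hpow (k : ι → ℕ) : iIndepFun (fun i ω => Y i ω ^ k i) μ :=
    hY.comp (fun i y => y ^ k i) fun i => measurable_id.pow_const _
  have hterm (ω : Ω) (k : ι → ℕ) :
      ∏ i, (a i * Y i ω) ^ k i = (∏ i, a i ^ k i) * ∏ i, Y i ω ^ k i := by
    simp_rw [mul_pow, prod_mul_distrib]
  simp_rw [sum_pow_eq_sum_piAntidiag, hterm, ← mul_assoc]
  rw [integral_finsetSum _ fun k _ => ((hpow k).integrable_fun_prod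
    (fun i => ((hmeas i).pow_const _).aemeasurable) fun i => hint i (k i)).const_mul _]
  refine sum_congr rfl fun k _ => ?_
  rw [integral_const_mul, (hpow k).integral_fun_prod_eq_prod_integral
    fun i => ((hmeas i).pow_const _).aestronglyMeasurable]

end ProbabilityTheory

lemma Nat.two_pow_mul_doubleFactorial_eq_choose_mul_factorial (k : ℕ) :
    2 ^ k * (2 * k - 1)‼ = (2 * k).choose k * k ! := by
  refine Nat.eq_of_mul_eq_mul_right k.factorial_pos ?_
  have hsplit : (2 * k)‼ * (2 * k - 1)‼ = (2 * k)! := by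
    cases k with
    | zero => rfl
    | succ j => simpa [Nat.mul_succ] using (Nat.factorial_eq_mul_doubleFactorial (2 * j + 1)).symm
  calc 2 ^ k * (2 * k - 1)‼ * k ! = (2 * k)‼ * (2 * k - 1)‼ := by
        rw [Nat.doubleFactorial_two_mul]; ring
    _ = (2 * k).choose k * k ! * k ! := by
        rw [hsplit, two_mul, Nat.add_choose_mul_factorial_mul_factorial]

lemma Nat.two_pow_sum_mul_multinomial_mul_prod_doubleFactorial {ι : Type*} (s : Finset ι)
    (k : ι → ℕ) :
    2 ^ (∑ i ∈ s, k i) * Nat.multinomial s k * ∏ i ∈ s, (2 * k i - 1)‼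
      = (∑ i ∈ s, k i)! * ∏ i ∈ s, (2 * k i).choose (k i) := by
  calc 2 ^ (∑ i ∈ s, k i) * Nat.multinomial s k * ∏ i ∈ s, (2 * k i - 1)‼
      = Nat.multinomial s k * ∏ i ∈ s, 2 ^ k i * (2 * k i - 1)‼ := by
        rw [prod_mul_distrib, prod_pow_eq_pow_sum]; ring
    _ = (∏ i ∈ s, (k i)!) * Nat.multinomial s k * ∏ i ∈ s, (2 * k i).choose (k i) := by
        simp_rw [Nat.two_pow_mul_doubleFactorial_eq_choose_mul_factorial, prod_mul_distrib]; ring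
    _ = (∑ i ∈ s, k i)! * ∏ i ∈ s, (2 * k i).choose (k i) := by
        rw [Nat.multinomial_spec]

section ExponentMultiset

variable {ι : Type*} [Fintype ι]

def exponentMultiset (k : ι → ℕ) : Multiset ℕ :=
  (univ.val.map k).filter (0 < ·)

lemma exponentMultiset_eq_map_filter (k : ι → ℕ) :
    exponentMultiset k = (univ.filter fun i => 0 < k i).val.map k := by
  rw [exponentMultiset, Multiset.filter_map]; rfl

lemma prod_map_exponentMultiset {M : Type*} [CommMonoid M] (g : ℕ → M) (hg : g 0 = 1)
    (k : ι → ℕ) : ((exponentMultiset k).map g).prod = ∏ i, g (k i) := by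
  rw [exponentMultiset_eq_map_filter, Multiset.map_map, ← Finset.prod_eq_multiset_prod]
  exact prod_filter_of_ne fun i _ hi => Nat.pos_of_ne_zero fun h0 => hi (by simp [h0, hg])

lemma sum_exponentMultiset (k : ι → ℕ) : (exponentMultiset k).sum = ∑ i, k i := by
  rw [exponentMultiset_eq_map_filter, ← Finset.sum_eq_multiset_sum]
  exact sum_filter_of_ne fun i _ hi => Nat.pos_of_ne_zero hi

def Nat.Partition.ofExponents {p : ℕ} (k : ι → ℕ) (hk : ∑ i, k i = p) : p.Partition where
  parts := exponentMultiset k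
  parts_pos hm := (Multiset.mem_filter.mp hm).2
  parts_sum := (sum_exponentMultiset k).trans hk

lemma sum_piAntidiag_eq_sum_partition [DecidableEq ι] {M : Type*} [AddCommMonoid M] (p : ℕ)
    (F : (ι → ℕ) → M) :
    ∑ k ∈ piAntidiag univ p, F k
      = ∑ lam : p.Partition, ∑ k ∈ piAntidiag univ p with exponentMultiset k = lam.parts, F k := by
  let parts : p.Partition ↪ Multiset ℕ := ⟨Nat.Partition.parts, fun _ _ => Nat.Partition.ext⟩
  rw [← sum_fiberwise_of_maps_to (t := univ.map parts) (g := exponentMultiset), sum_map]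
  · rfl
  intro k hk
  exact mem_map_of_mem parts (mem_univ (Nat.Partition.ofExponents k (mem_piAntidiag.mp hk).1))

end ExponentMultiset

lemma sum_multinomial_mul_prod_doubleFactorial_eq_sum_partition (n p : ℕ) (a : Fin n → ℝ) :
    ∑ k ∈ piAntidiag univ p,
        (Nat.multinomial univ k : ℝ) * (∏ i, a i ^ k i) * ∏ i, ((2 * k i - 1)‼ : ℝ)
      = (p.factorial : ℝ) / 2 ^ p *
        ∑ lam : Nat.Partition p,
          (lam.parts.map fun k => (Nat.choose (2 * k) k : ℝ)).prod * monomialSymValue lam a := by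
  have hterm : ∀ k ∈ piAntidiag univ p,
      (Nat.multinomial univ k : ℝ) * (∏ i, a i ^ k i) * ∏ i, ((2 * k i - 1)‼ : ℝ)
        = (p.factorial : ℝ) / 2 ^ p *
          (((exponentMultiset k).map fun m => (Nat.choose (2 * m) m : ℝ)).prod
            * ∏ i, a i ^ k i) := by
    intro k hk
    have hcoeff := Nat.two_pow_sum_mul_multinomial_mul_prod_doubleFactorial univ k
    rw [(mem_piAntidiag.mp hk).1] at hcoeff
    rw [prod_map_exponentMultiset _ (by simp), div_mul_eq_mul_div, eq_div_iff (by positivity)]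
    have hcoeff_real := congrArg (Nat.cast : ℕ → ℝ) hcoeff
    push_cast at hcoeff_real
    linear_combination (∏ i, a i ^ k i) * hcoeff_real
  rw [sum_congr rfl hterm, ← mul_sum, sum_piAntidiag_eq_sum_partition]
  refine congrArg _ (sum_congr rfl fun lam _ => ?_)
  rw [monomialSymValue, ← piAntidiag_univ_fin_eq_antidiagonalTuple, mul_sum]
  exact sum_congr rfl fun k hk => by
    rw [show exponentMultiset k = lam.parts from (mem_filter.mp hk).2]

theorem moment_weighted_sum_sq_gaussian_general
    {Ω : Type*} [MeasurableSpace Ω] (μ : Measure Ω)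
    (n p : ℕ) (X : Fin n → Ω → ℝ) (hmeas : ∀ i, Measurable (X i))
    (hindep : iIndepFun X μ)
    (hgauss : ∀ i, Measure.map (X i) μ = gaussianReal 0 1)
    (a : Fin n → ℝ) :
    ∫ ω, (∑ i, a i * X i ω ^ 2) ^ p ∂μ
      = (p.factorial : ℝ) / 2 ^ p *
        ∑ lam : Nat.Partition p,
          (lam.parts.map fun k => (Nat.choose (2 * k) k : ℝ)).prod
            * monomialSymValue lam a := by
  have hlaw (i : Fin n) : HasLaw (X i) (gaussianReal 0 1) μ := ⟨(hmeas i).aemeasurable, hgauss i⟩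
  have hsq : iIndepFun (fun i ω => X i ω ^ 2) μ :=
    hindep.comp (fun _ x => x ^ 2) fun _ => measurable_id.pow_const 2
  have hmoment (i : Fin n) (m : ℕ) : ∫ ω, (X i ω ^ 2) ^ m ∂μ = (2 * m - 1)‼ := by
    simp_rw [← pow_mul]
    exact ((hlaw i).integral_comp (f := fun x => x ^ (2 * m)) (by fun_prop)).trans
      (integral_pow_two_mul_gaussianReal m)
  have hint (i : Fin n) (m : ℕ) : Integrable (fun ω => (X i ω ^ 2) ^ m) μ := by
    refine (integrable_map_measure (g := fun x => (x ^ 2) ^ m) (by fun_prop)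
      (hmeas i).aemeasurable).mp ?_
    simpa only [hgauss i, ← pow_mul] using integrable_pow_gaussianReal 0 1 (2 * m)
  rw [hsq.integral_sum_mul_pow (fun i => (hmeas i).pow_const 2) hint a p]
  simp_rw [hmoment]
  exact sum_multinomial_mul_prod_doubleFactorial_eq_sum_partition n p a

/-- For independent standard Gaussians `X₁,…,Xₙ` and reals `a₁,…,aₙ`,
`E[(∑ aᵢXᵢ²)^p] = (p!/2^p) ∑_λ (∏_{k∈λ} C(2k,k)) m_λ(a)`, summing over
partitions `λ` of `p`. -/
theorem moment_weighted_sum_sq_gaussian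
    {Ω : Type*} [MeasurableSpace Ω] (μ : Measure Ω) [IsProbabilityMeasure μ]
    (n p : ℕ) (X : Fin n → Ω → ℝ) (hmeas : ∀ i, Measurable (X i))
    (hindep : iIndepFun X μ)
    (hgauss : ∀ i, Measure.map (X i) μ = gaussianReal 0 1)
    (a : Fin n → ℝ) :
    ∫ ω, (∑ i, a i * X i ω ^ 2) ^ p ∂μ
      = (p.factorial : ℝ) / 2 ^ p *
        ∑ lam : Nat.Partition p,
          (lam.parts.map fun k => (Nat.choose (2 * k) k : ℝ)).prod
            * monomialSymValue lam a :=
  moment_weighted_sum_sq_gaussian_general μ n p X hmeas hindep hgauss a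
end

section
/- For independent standard normal random variables X_1,...,X_n,Y_1,...,Y_n and real numbers a_1,...,a_n, E[(∑_i a_i(X_i^2+Y_i^2))^p] = 2^p p! h_p(a_1,...,a_n), where h_p is the complete homogeneous symmetric polynomial of degree p. -/
/-!
The pairs `(Xᵢ, Yᵢ)` are independent with law `γ ⊗ γ`, `γ` the standard Gaussian, so the
expectation is an integral against the product measure `(γ ⊗ γ)ⁿ`. Expanding the power by the
multinomial theorem and integrating each monomial factor by factor, everything reduces to the
moments `E[(X² + Y²)ᵏ] = 2ᵏ k!`: in polar coordinates `X² + Y²` has density `e^{-u/2} / 2` on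
`(0, ∞)`, so these are Gamma integrals. The multinomial coefficient of `∏ aᵢ^kᵢ` times
`∏ kᵢ!` is `p!`, which leaves `2ᵖ p!` times the sum of all monomials of degree `p`.
-/

open MeasureTheory ProbabilityTheory

/-- The complete homogeneous symmetric polynomial `h_p` evaluated at `a₁,…,aₙ`:
the sum of all monomials of total degree `p`. -/
noncomputable def completeHomogeneousValue (n p : ℕ) (a : Fin n → ℝ) : ℝ :=
  ∑ k ∈ Finset.Nat.antidiagonalTuple n p, ∏ i, a i ^ k i

open Real Set

theorem integral_comp_sq_add_sq {E : Type*} [NormedAddCommGroup E] [NormedSpace ℝ E]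
    (f : ℝ → E) : ∫ z : ℝ × ℝ, f (z.1 ^ 2 + z.2 ^ 2) = π • ∫ u in Ioi 0, f u := by
  have h_polar (p : ℝ × ℝ) :
      (polarCoord.symm p).1 ^ 2 + (polarCoord.symm p).2 ^ 2 = p.1 ^ 2 := by
    simp only [polarCoord_symm_apply, mul_pow, ← mul_add, cos_sq_add_sin_sq, mul_one]
  have h_sq : ∫ r in Ioi (0 : ℝ), (2 * r) • f (r ^ 2) = ∫ u in Ioi 0, f u := by
    convert integral_comp_rpow_Ioi f (p := 2) two_ne_zero using 4 with r
    · norm_num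
    · rw [Real.rpow_two]
  rw [← integral_comp_polarCoord_symm, polarCoord_target, Measure.volume_eq_prod,
    ← Measure.prod_restrict]
  simp only [h_polar]
  rw [integral_fun_fst (fun r => r • f (r ^ 2)), ← h_sq]
  simp only [measureReal_restrict_apply_univ, Real.volume_real_Ioo, mul_smul,
    integral_smul]
  rw [smul_smul, sub_neg_eq_add, max_eq_left (by positivity)]
  ring_nf

theorem gaussianReal_prod_gaussianReal_eq_withDensity :
    (gaussianReal 0 1).prod (gaussianReal 0 1) = (volume : Measure (ℝ × ℝ)).withDensity
      fun z => ENNReal.ofReal ((2 * π)⁻¹ * exp (-(z.1 ^ 2 + z.2 ^ 2) / 2)) := by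
  rw [gaussianReal_of_var_ne_zero 0 one_ne_zero, gaussianPDF_def,
    prod_withDensity (by fun_prop) (by fun_prop), ← Measure.volume_eq_prod]
  congr with z
  rw [← ENNReal.ofReal_mul (gaussianPDFReal_nonneg 0 1 z.1)]
  congr 1
  simp only [gaussianPDFReal, NNReal.coe_one, mul_one, sub_zero]
  rw [mul_mul_mul_comm, ← mul_inv, Real.mul_self_sqrt (by positivity), ← Real.exp_add]
  ring_nf

-- That is, `X² + Y²` is exponentially distributed with mean `2`.
theorem integral_gaussianReal_prod_comp_sq_add_sq (f : ℝ → ℝ) :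
    ∫ z, f (z.1 ^ 2 + z.2 ^ 2) ∂(gaussianReal 0 1).prod (gaussianReal 0 1)
      = 2⁻¹ * ∫ u in Ioi 0, exp (-u / 2) * f u := by
  rw [gaussianReal_prod_gaussianReal_eq_withDensity, integral_withDensity_eq_integral_toReal_smul
    (by fun_prop) (ae_of_all _ fun _ => ENNReal.ofReal_lt_top)]
  simp only [ENNReal.toReal_ofReal (by positivity : (0 : ℝ) ≤ (2 * π)⁻¹ * exp _), smul_eq_mul]
  rw [integral_comp_sq_add_sq (fun u => (2 * π)⁻¹ * exp (-u / 2) * f u), smul_eq_mul]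
  simp only [mul_assoc, integral_const_mul]
  field_simp

theorem integral_sq_add_sq_pow_gaussianReal_prod (k : ℕ) :
    ∫ z, (z.1 ^ 2 + z.2 ^ 2) ^ k ∂(gaussianReal 0 1).prod (gaussianReal 0 1)
      = 2 ^ k * k.factorial := by
  have h_gamma := Real.integral_rpow_mul_exp_neg_mul_Ioi (a := k + 1) (r := 2⁻¹)
    (by positivity) (by norm_num)
  rw [add_sub_cancel_right, one_div, inv_inv, Real.rpow_add_one two_ne_zero, Real.rpow_natCast,
    Real.Gamma_nat_eq_factorial] at h_gamma
  have h_pow : ∫ u in Ioi (0 : ℝ), exp (-u / 2) * u ^ k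
      = ∫ u in Ioi (0 : ℝ), u ^ (k : ℝ) * exp (-(2⁻¹ * u)) := by
    refine setIntegral_congr_fun measurableSet_Ioi fun u _ => ?_
    rw [Real.rpow_natCast, mul_comm, neg_div, div_eq_inv_mul]
  rw [integral_gaussianReal_prod_comp_sq_add_sq (· ^ k), h_pow, h_gamma]
  ring

theorem ProbabilityTheory.iIndepFun.map_prodMk_eq_pi_prod {Ω ι β : Type*} [MeasurableSpace Ω]
    [MeasurableSpace β] [Fintype ι] {μ : Measure Ω} {X Y : ι → Ω → β}
    (h : iIndepFun (Sum.elim X Y) μ) (hX : ∀ i, AEMeasurable (X i) μ)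
    (hY : ∀ i, AEMeasurable (Y i) μ) :
    μ.map (fun ω i => (X i ω, Y i ω)) = Measure.pi fun i => (μ.map (X i)).prod (μ.map (Y i)) := by
  have := h.isProbabilityMeasure
  have hXY : ∀ j, AEMeasurable (Sum.elim X Y j) μ := Sum.rec hX hY
  have h_split := (measurePreserving_sumPiEquivProdPi fun j => μ.map (Sum.elim X Y j)).trans
    (measurePreserving_arrowProdEquivProdArrow β β ι (fun i => μ.map (X i))
      (fun i => μ.map (Y i))).symm
  rw [← h_split.map_eq, ← h.map_fun_eq_pi_map hXY, AEMeasurable.map_map_of_aemeasurable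
    h_split.measurable.aemeasurable (aemeasurable_pi_lambda _ hXY)]
  rfl

section ProductMeasure

variable {ι E : Type*} [Fintype ι] [DecidableEq ι] [MeasurableSpace E] {ν : Measure E}
  [SigmaFinite ν] {Z : E → ℝ}

open Finset

theorem integral_sum_mul_pow_pi (hZ : ∀ k, Integrable (fun z => Z z ^ k) ν) (a : ι → ℝ) (p : ℕ) :
    ∫ x, (∑ i, a i * Z (x i)) ^ p ∂Measure.pi (fun _ => ν)
      = ∑ k ∈ univ.piAntidiag p,
          (Nat.multinomial univ k : ℝ) * ∏ i, (a i ^ k i * ∫ z, Z z ^ k i ∂ν) := by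
  simp_rw [sum_pow_eq_sum_piAntidiag, mul_pow, prod_mul_distrib]
  rw [integral_finsetSum _ fun k _ =>
    ((Integrable.fintype_prod fun i => hZ (k i)).const_mul _).const_mul _]
  refine sum_congr rfl fun k _ => ?_
  rw [integral_const_mul, integral_const_mul,
    integral_fintype_prod_eq_prod (fun _ z => Z z ^ k _)]

theorem integral_sum_mul_pow_pi_of_integral_pow_eq (hZ : ∀ k, Integrable (fun z => Z z ^ k) ν)
    {c : ℝ} (h_mom : ∀ k, ∫ z, Z z ^ k ∂ν = c ^ k * k.factorial) (a : ι → ℝ) (p : ℕ) :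
    ∫ x, (∑ i, a i * Z (x i)) ^ p ∂Measure.pi (fun _ => ν)
      = c ^ p * p.factorial * ∑ k ∈ univ.piAntidiag p, ∏ i, a i ^ k i := by
  rw [integral_sum_mul_pow_pi hZ, mul_sum]
  refine sum_congr rfl fun k hk => ?_
  have h_multinomial : (Nat.multinomial univ k : ℝ) * ∏ i, ((k i).factorial : ℝ) = p.factorial := by
    rw [← (mem_piAntidiag.mp hk).1]
    exact_mod_cast (mul_comm _ _).trans (Nat.multinomial_spec univ k)
  simp only [h_mom, prod_mul_distrib, prod_pow_eq_pow_sum, (mem_piAntidiag.mp hk).1]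
  rw [← h_multinomial]
  ring

end ProductMeasure

/-- For independent standard Gaussians `X₁,…,Xₙ,Y₁,…,Yₙ` and reals `a₁,…,aₙ`,
`E[(∑ aᵢ(Xᵢ²+Yᵢ²))^p] = 2^p p! h_p(a)`. -/
theorem moment_weighted_sum_sq_double_gaussian
    {Ω : Type*} [MeasurableSpace Ω] (μ : Measure Ω) [IsProbabilityMeasure μ]
    (n p : ℕ) (X Y : Fin n → Ω → ℝ)
    (hmeasX : ∀ i, Measurable (X i)) (hmeasY : ∀ i, Measurable (Y i))
    (hindep : iIndepFun
      (Sum.elim X Y : Fin n ⊕ Fin n → Ω → ℝ) μ)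
    (hgaussX : ∀ i, Measure.map (X i) μ = gaussianReal 0 1)
    (hgaussY : ∀ i, Measure.map (Y i) μ = gaussianReal 0 1)
    (a : Fin n → ℝ) :
    ∫ ω, (∑ i, a i * (X i ω ^ 2 + Y i ω ^ 2)) ^ p ∂μ
      = 2 ^ p * (p.factorial : ℝ) * completeHomogeneousValue n p a := by
  have hV : Measurable fun ω i => (X i ω, Y i ω) :=
    measurable_pi_lambda _ fun i => (hmeasX i).prodMk (hmeasY i)
  have h_law : μ.map (fun ω i => (X i ω, Y i ω))
      = Measure.pi fun _ => (gaussianReal 0 1).prod (gaussianReal 0 1) := by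
    simp only [hindep.map_prodMk_eq_pi_prod (fun i => (hmeasX i).aemeasurable)
      (fun i => (hmeasY i).aemeasurable), hgaussX, hgaussY]
  have h_int (k : ℕ) : Integrable (fun z : ℝ × ℝ => (z.1 ^ 2 + z.2 ^ 2) ^ k)
      ((gaussianReal 0 1).prod (gaussianReal 0 1)) :=
    -- a nonzero Bochner integral forces integrability
    .of_integral_ne_zero (by rw [integral_sq_add_sq_pow_gaussianReal_prod]; positivity)
  calc ∫ ω, (∑ i, a i * (X i ω ^ 2 + Y i ω ^ 2)) ^ p ∂μ
      = ∫ v, (∑ i, a i * ((v i).1 ^ 2 + (v i).2 ^ 2)) ^ p ∂μ.map fun ω i => (X i ω, Y i ω) :=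
        by rw [integral_map (by fun_prop) (by fun_prop)]
    _ = 2 ^ p * p.factorial * ∑ k ∈ Finset.univ.piAntidiag p, ∏ i, a i ^ k i := by
        rw [h_law]
        exact integral_sum_mul_pow_pi_of_integral_pow_eq h_int
          integral_sq_add_sq_pow_gaussianReal_prod a p
    _ = 2 ^ p * p.factorial * completeHomogeneousValue n p a := by
        rw [completeHomogeneousValue, Finset.piAntidiag_univ_fin_eq_antidiagonalTuple]
end

section
/- Let G ⊂ O(d) be a finite irreducible group of isometries, so that the tight 1-frame identity (1/|G|)∑_{U∈G}|TUx|² = (1/d)‖T‖₂²|x|² holds for all matrices T and vectors x. Then for every convex function Φ : [0,∞) → R, every invertible matrix T with singular values s_i, and every unit vector x: (1/|G|)∑_{U∈G} Φ(|T^{-1}Ux|²) ≤ (1/d) ∑_{i=1}^d Φ(s_i(T^{-1})²) = (1/d) tr Φ(T^{-⊤}T^{-1}). -/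
/-!
Write `T⁻¹ = W diag(s) V` and `y_U = V U x`. Then `|T⁻¹Ux|² = ∑ᵢ y_{U,i}² sᵢ²`, and since
`|y_U| = |x| = 1` this is a convex combination of the `sᵢ²`, so Jensen's inequality bounds
`Φ(|T⁻¹Ux|²)` by `∑ᵢ y_{U,i}² Φ(sᵢ²)`. The frame identity, applied to a single row of `V`,
shows that every weight `y_{U,i}²` has average `1/d` over `G`.
-/

open Matrix

section Orthogonal

variable {n R : Type*} [Fintype n] [DecidableEq n] [CommRing R]

theorem sum_sq_mulVec_of_transpose_mul_self_eq_one {M : Matrix n n R} (hM : Mᵀ * M = 1)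
    (z : n → R) : ∑ i, (M *ᵥ z) i ^ 2 = ∑ i, z i ^ 2 := by
  have hdot : ∀ w : n → R, ∑ i, w i ^ 2 = w ⬝ᵥ w := fun w => by simp only [dotProduct, sq]
  rw [hdot, hdot, dotProduct_mulVec, ← mulVec_transpose, mulVec_mulVec, hM, one_mulVec]

theorem sum_sq_row_of_mul_transpose_eq_one {M : Matrix n n R}
    (hM : M * Mᵀ = 1) (i : n) : ∑ k, M i k ^ 2 = 1 := by
  simpa [mul_apply, sq] using congrFun (congrFun hM i) i

theorem sum_sq_mulVec_mul_diagonal_mul {W : Matrix n n R} (hW : Wᵀ * W = 1)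
    (s : n → R) (V : Matrix n n R) (z : n → R) :
    ∑ i, ((W * diagonal s * V) *ᵥ z) i ^ 2 = ∑ i, (V *ᵥ z) i ^ 2 * s i ^ 2 := by
  rw [Matrix.mul_assoc, ← mulVec_mulVec, sum_sq_mulVec_of_transpose_mul_self_eq_one hW,
    ← mulVec_mulVec]
  simp only [mulVec_diagonal, mul_pow, mul_comm]

end Orthogonal

theorem ConvexOn.average_map_sum_mul_le {ι κ : Type*} [Fintype ι] {s : Set ℝ} {Φ : ℝ → ℝ}
    (hΦ : ConvexOn ℝ s Φ) {p : ι → ℝ} (hp : ∀ i, p i ∈ s) (G : Finset κ) {w : κ → ι → ℝ}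
    (hw₀ : ∀ k ∈ G, ∀ i, 0 ≤ w k i) (hw₁ : ∀ k ∈ G, ∑ i, w k i = 1) {c : ι → ℝ}
    (hc : ∀ i, (1 / (G.card : ℝ)) * ∑ k ∈ G, w k i = c i) :
    (1 / (G.card : ℝ)) * ∑ k ∈ G, Φ (∑ i, w k i * p i) ≤ ∑ i, c i * Φ (p i) := by
  have jensen : ∀ k ∈ G, Φ (∑ i, w k i * p i) ≤ ∑ i, w k i * Φ (p i) := fun k hk => by
    simpa only [smul_eq_mul] using
      hΦ.map_sum_le (fun i _ => hw₀ k hk i) (hw₁ k hk) (fun i _ => hp i)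
  calc (1 / (G.card : ℝ)) * ∑ k ∈ G, Φ (∑ i, w k i * p i)
      ≤ (1 / (G.card : ℝ)) * ∑ k ∈ G, ∑ i, w k i * Φ (p i) := by
        gcongr with k hk
        exact jensen k hk
    _ = ∑ i, c i * Φ (p i) := by
        simp only [← hc, Finset.sum_comm (s := G), Finset.mul_sum, Finset.sum_mul, mul_assoc]

def IsTightOneFrame {d : ℕ} (G : Finset (Matrix (Fin d) (Fin d) ℝ)) : Prop :=
  ∀ (A : Matrix (Fin d) (Fin d) ℝ) (x : Fin d → ℝ),
    (1 / (G.card : ℝ)) * ∑ U ∈ G, ∑ i, (A.mulVec (U.mulVec x) i) ^ 2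
      = (1 / d) * (∑ i, ∑ j, A i j ^ 2) * ∑ i, x i ^ 2

theorem IsTightOneFrame.average_sq_mulVec_apply {d : ℕ} {G : Finset (Matrix (Fin d) (Fin d) ℝ)}
    (hG : IsTightOneFrame G) (V : Matrix (Fin d) (Fin d) ℝ) (i : Fin d) (x : Fin d → ℝ) :
    (1 / (G.card : ℝ)) * ∑ U ∈ G, (V *ᵥ (U *ᵥ x)) i ^ 2
      = (1 / d) * (∑ k, V i k ^ 2) * ∑ k, x k ^ 2 := by
  -- Apply the frame identity to the matrix keeping only the `i`-th row of `V`.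
  let A : Matrix (Fin d) (Fin d) ℝ := of fun j k => if j = i then V i k else 0
  have hA : ∀ z, ∑ j, (A *ᵥ z) j ^ 2 = (V *ᵥ z) i ^ 2 := fun z => by
    simp [A, mulVec, dotProduct, apply_ite (· ^ 2)]
  have hA₂ : ∑ j, ∑ k, A j k ^ 2 = ∑ k, V i k ^ 2 := by
    simp [A, apply_ite (· ^ 2)]
  simpa only [hA, hA₂] using hG A x

theorem nontight_frame_convex_bound_general (d : ℕ)
    (G : Finset (Matrix (Fin d) (Fin d) ℝ))
    (horth : ∀ U ∈ G, U * Uᵀ = 1)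
    (hframe : ∀ (A : Matrix (Fin d) (Fin d) ℝ) (x : Fin d → ℝ),
      (1 / (G.card : ℝ)) * ∑ U ∈ G, ∑ i, (A.mulVec (U.mulVec x) i) ^ 2
        = (1 / d) * (∑ i, ∑ j, A i j ^ 2) * ∑ i, x i ^ 2)
    (Φ : ℝ → ℝ) (hΦ : ConvexOn ℝ (Set.Ici 0) Φ)
    (T : Matrix (Fin d) (Fin d) ℝ)
    (s : Fin d → ℝ)
    (W V : Matrix (Fin d) (Fin d) ℝ) (hW : W * Wᵀ = 1) (hV : V * Vᵀ = 1)
    (hSVD : T⁻¹ = W * diagonal s * V)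
    (x : Fin d → ℝ) (hx : ∑ i, x i ^ 2 = 1) :
    (1 / (G.card : ℝ)) * ∑ U ∈ G, Φ (∑ i, (T⁻¹.mulVec (U.mulVec x) i) ^ 2)
      ≤ (1 / d) * ∑ i, Φ (s i ^ 2) := by
  have hVt : Vᵀ * V = 1 := mul_eq_one_comm.mp hV
  have weights_sum_one : ∀ U ∈ G, ∑ i, (V *ᵥ (U *ᵥ x)) i ^ 2 = 1 := fun U hU => by
    rw [sum_sq_mulVec_of_transpose_mul_self_eq_one hVt,
      sum_sq_mulVec_of_transpose_mul_self_eq_one (mul_eq_one_comm.mp (horth U hU)), hx]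
  have weights_average : ∀ i, (1 / (G.card : ℝ)) * ∑ U ∈ G, (V *ᵥ (U *ᵥ x)) i ^ 2 = 1 / d :=
    fun i => by
      rw [IsTightOneFrame.average_sq_mulVec_apply hframe, sum_sq_row_of_mul_transpose_eq_one hV,
        hx, mul_one, mul_one]
  calc (1 / (G.card : ℝ)) * ∑ U ∈ G, Φ (∑ i, (T⁻¹ *ᵥ (U *ᵥ x)) i ^ 2)
      = (1 / (G.card : ℝ)) * ∑ U ∈ G, Φ (∑ i, (V *ᵥ (U *ᵥ x)) i ^ 2 * s i ^ 2) := by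
        simp only [hSVD, sum_sq_mulVec_mul_diagonal_mul (mul_eq_one_comm.mp hW)]
    _ ≤ ∑ i, 1 / d * Φ (s i ^ 2) :=
        hΦ.average_map_sum_mul_le (fun i => sq_nonneg (s i)) G (fun _ _ _ => sq_nonneg _)
          weights_sum_one weights_average
    _ = 1 / d * ∑ i, Φ (s i ^ 2) := Finset.mul_sum _ _ _ |>.symm

/-- Let `G ⊂ O(d)` be a finite group satisfying the tight 1-frame identity
`(1/|G|)∑_{U∈G}|AUx|² = (1/d)‖A‖₂²|x|²` for all matrices `A` and vectors `x`.
Then for every convex `Φ : [0,∞) → ℝ`, every invertible `T` whose inverse has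
singular value decomposition `T⁻¹ = W diag(s) V`, and every unit vector `x`:
`(1/|G|)∑_{U∈G} Φ(|T⁻¹Ux|²) ≤ (1/d) ∑ᵢ Φ(sᵢ²) (= (1/d) tr Φ(T^{-⊤}T⁻¹))`. -/
theorem nontight_frame_convex_bound (d : ℕ) (hd : 0 < d)
    (G : Finset (Matrix (Fin d) (Fin d) ℝ)) (hGne : G.Nonempty)
    (horth : ∀ U ∈ G, U * Uᵀ = 1)
    (hframe : ∀ (A : Matrix (Fin d) (Fin d) ℝ) (x : Fin d → ℝ),
      (1 / (G.card : ℝ)) * ∑ U ∈ G, ∑ i, (A.mulVec (U.mulVec x) i) ^ 2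
        = (1 / d) * (∑ i, ∑ j, A i j ^ 2) * ∑ i, x i ^ 2)
    (Φ : ℝ → ℝ) (hΦ : ConvexOn ℝ (Set.Ici 0) Φ)
    (T : Matrix (Fin d) (Fin d) ℝ) (hT : IsUnit T.det)
    (s : Fin d → ℝ) (hs : ∀ i, 0 ≤ s i)
    (W V : Matrix (Fin d) (Fin d) ℝ) (hW : W * Wᵀ = 1) (hV : V * Vᵀ = 1)
    (hSVD : T⁻¹ = W * diagonal s * V)
    (x : Fin d → ℝ) (hx : ∑ i, x i ^ 2 = 1) :
    (1 / (G.card : ℝ)) * ∑ U ∈ G, Φ (∑ i, (T⁻¹.mulVec (U.mulVec x) i) ^ 2)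
      ≤ (1 / d) * ∑ i, Φ (s i ^ 2) :=
  nontight_frame_convex_bound_general d G horth hframe Φ hΦ T s W V hW hV hSVD x hx
end

section
/- In the ring of symmetric functions, let θ_{1/2} be the automorphism that sends each power sum p_k to p_k/2. Then (p!/2^p) ∑_λ (∏_{k∈λ} binomial(2k,k)) m_λ = 2^p p! · θ_{1/2}(h_p), where the sum is over partitions λ of p. -/
open MvPolynomial Finset

noncomputable def Pgen (n : ℕ) (a : ℕ → ℚ) (p : ℕ) : MvPolynomial (Fin n) ℚ :=
  ∑ k ∈ Finset.Nat.antidiagonalTuple n p, C (∏ i, a (k i)) * ∏ i, X i ^ k i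

lemma prod_X_pow (n : ℕ) (k : Fin n → ℕ) :
    (∏ i, X i ^ k i : MvPolynomial (Fin n) ℚ)
      = monomial (Finsupp.equivFunOnFinite.symm k) 1 := by
  rw [monic_monomial_eq, Finsupp.prod_fintype]
  · rfl
  · intro i; simp

lemma coeff_Pgen (n : ℕ) (a : ℕ → ℚ) (p : ℕ) (d : Fin n →₀ ℕ) :
    coeff d (Pgen n a p) = if (∑ i, d i) = p then ∏ i, a (d i) else 0 := by
  classical
  unfold Pgen
  have hcond : ∀ k : Fin n → ℕ, (Finsupp.equivFunOnFinite.symm k = d) ↔ k = ⇑d := by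
    intro k
    rw [Equiv.symm_apply_eq]
    rfl
  simp_rw [coeff_sum, coeff_C_mul, prod_X_pow, coeff_monomial, hcond, mul_ite, mul_one, mul_zero]
  rw [Finset.sum_ite_eq' (Finset.Nat.antidiagonalTuple n p) (⇑d) (fun k => ∏ i, a (k i))]
  simp [Finset.Nat.mem_antidiagonalTuple]

lemma sum_Icc_sub (a : ℕ → ℚ) (m : ℕ) :
    ∑ i ∈ Finset.Icc 1 m, a (m - i) = ∑ t ∈ Finset.range m, a t := by
  apply Finset.sum_nbij' (fun i => m - i) (fun t => m - t)
  · intro i hi; simp only [Finset.mem_Icc] at hi; simp only [Finset.mem_range]; omega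
  · intro t ht; simp only [Finset.mem_range] at ht; simp only [Finset.mem_Icc]; omega
  · intro i hi; simp only [Finset.mem_Icc] at hi; omega
  · intro t ht; simp only [Finset.mem_range] at ht; omega
  · intro i hi; rfl

lemma Pgen_rec (n : ℕ) (a : ℕ → ℚ) (c : ℚ)
    (ha : ∀ m : ℕ, (m : ℚ) * a m = c * ∑ j ∈ Finset.range m, a j) (p : ℕ) :
    C (p : ℚ) * Pgen n a p
      = C c * ∑ i ∈ Finset.Icc 1 p, psum (Fin n) ℚ i * Pgen n a (p - i) := by
  classical
  apply MvPolynomial.ext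
  intro d
  have hdj : ∀ j : Fin n, d j ≤ ∑ l, d l :=
    fun j => Finset.single_le_sum (f := fun l => d l) (fun _ _ => Nat.zero_le _) (mem_univ j)
  have hsingle : ∀ (j : Fin n) (i : ℕ), ∑ l, (Finsupp.single j i) l = i := by
    intro j i
    rw [Finset.sum_eq_single j]
    · simp
    · intro l _ hl; simp [Finsupp.single_apply, hl.symm]
    · simp
  have main : ∀ i, 1 ≤ i → i ≤ p → ∀ j : Fin n,
      coeff d (X j ^ i * Pgen n a (p - i))
        = if (∑ l, d l) = p ∧ i ≤ d j
          then a (d j - i) * ∏ l ∈ Finset.univ.erase j, a (d l) else 0 := by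
    intro i h1 h2 j
    rw [X_pow_eq_monomial, coeff_monomial_mul']
    simp only [Finsupp.single_le_iff]
    by_cases hij : i ≤ d j
    · rw [if_pos hij, coeff_Pgen, one_mul]
      have hsub : ∀ l, (d - Finsupp.single j i) l = d l - (Finsupp.single j i) l :=
        fun l => Finsupp.tsub_apply d _ l
      have hs : ∑ l, (d - Finsupp.single j i) l = (∑ l, d l) - i := by
        have h1 : ∑ l, (d - Finsupp.single j i) l + ∑ l, (Finsupp.single j i) l
            = ∑ l, d l := by
          rw [← Finset.sum_add_distrib]
          apply Finset.sum_congr rfl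
          intro l _
          rw [hsub l]
          have : Finsupp.single j i l ≤ d l := by
            rcases eq_or_ne l j with rfl | hne
            · simpa [Finsupp.single_apply] using hij
            · simp [Finsupp.single_apply, hne.symm]
          omega
        rw [hsingle j i] at h1
        omega
      rw [hs]
      have hiq : i ≤ ∑ l, d l := le_trans hij (hdj j)
      by_cases hd : (∑ l, d l) = p
      · rw [if_pos (by omega), if_pos ⟨hd, hij⟩]
        rw [← Finset.mul_prod_erase Finset.univ (fun l => a ((d - Finsupp.single j i) l))
          (mem_univ j)]
        congr 1
        · rw [hsub j]; simp [Finsupp.single_apply]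
        · apply Finset.prod_congr rfl
          intro l hl
          have hne : l ≠ j := (Finset.mem_erase.mp hl).1
          rw [hsub l]
          simp [Finsupp.single_apply, hne.symm]
      · rw [if_neg (by omega), if_neg (by tauto)]
    · rw [if_neg hij, if_neg (by tauto)]
  rw [coeff_C_mul, coeff_C_mul, coeff_sum, coeff_Pgen]
  have hpsum : ∀ i, psum (Fin n) ℚ i * Pgen n a (p - i)
      = ∑ j : Fin n, X j ^ i * Pgen n a (p - i) := by
    intro i; rw [psum, Finset.sum_mul]
  simp_rw [hpsum, coeff_sum]
  rw [Finset.sum_congr rfl (fun i hi => Finset.sum_congr rfl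
    (fun j _ => main i (Finset.mem_Icc.mp hi).1 (Finset.mem_Icc.mp hi).2 j))]
  by_cases hd : (∑ l, d l) = p
  · rw [if_pos hd]
    simp only [hd, true_and]
    rw [Finset.sum_comm]
    have hstep : ∀ j : Fin n,
        (∑ i ∈ Finset.Icc 1 p, if i ≤ d j
          then a (d j - i) * ∏ l ∈ Finset.univ.erase j, a (d l) else 0)
        = (∑ t ∈ Finset.range (d j), a t) * ∏ l ∈ Finset.univ.erase j, a (d l) := by
      intro j
      rw [← Finset.sum_filter, ← sum_Icc_sub a (d j), ← Finset.sum_mul]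
      congr 1
      apply Finset.sum_congr
      · ext i
        simp only [Finset.mem_filter, Finset.mem_Icc]
        have := hdj j
        omega
      · intro i _; rfl
    rw [Finset.sum_congr rfl (fun j _ => hstep j), Finset.mul_sum]
    have hterm : ∀ j : Fin n,
        c * ((∑ t ∈ Finset.range (d j), a t) * ∏ l ∈ Finset.univ.erase j, a (d l))
          = (d j : ℚ) * ∏ l, a (d l) := by
      intro j
      rw [← mul_assoc, ← ha (d j), mul_assoc,
        Finset.mul_prod_erase Finset.univ (fun l => a (d l)) (mem_univ j)]
    rw [Finset.sum_congr rfl (fun j _ => hterm j), ← Finset.sum_mul]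
    congr 1
    rw [← Nat.cast_sum, hd]
  · rw [if_neg hd]
    simp only [hd, false_and, if_false]
    simp

noncomputable def abin (m : ℕ) : ℚ := (Nat.choose (2 * m) m : ℚ) / 4 ^ m

lemma choose_rec (m : ℕ) :
    (m + 1) * Nat.choose (2 * m + 2) (m + 1) = 2 * (2 * m + 1) * Nat.choose (2 * m) m := by
  have h1 := Nat.add_one_mul_choose_eq (2 * m + 1) m
  have h2 := Nat.add_one_mul_choose_eq (2 * m) m
  have h3 := Nat.choose_symm_half m
  apply Nat.eq_of_mul_eq_mul_left (Nat.succ_pos m)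
  calc (m + 1) * ((m + 1) * Nat.choose (2 * m + 2) (m + 1))
      = (Nat.choose (2 * m + 1 + 1) (m + 1) * (m + 1)) * (m + 1) := by ring
    _ = ((2 * m + 1 + 1) * Nat.choose (2 * m + 1) m) * (m + 1) := by rw [← h1]
    _ = (2 * m + 2) * (Nat.choose (2 * m + 1) (m + 1) * (m + 1)) := by rw [h3]; ring
    _ = (2 * m + 2) * ((2 * m + 1) * Nat.choose (2 * m) m) := by
        rw [show (2 * m + 1) * Nat.choose (2 * m) m
            = Nat.choose (2 * m + 1) (m + 1) * (m + 1) from h2]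
    _ = (m + 1) * (2 * (2 * m + 1) * Nat.choose (2 * m) m) := by ring

lemma abin_sum (m : ℕ) :
    ∑ j ∈ Finset.range m, abin j = 2 * m * abin m := by
  induction m with
  | zero => simp
  | succ m ih =>
    rw [Finset.sum_range_succ, ih]
    unfold abin
    have h : ((m : ℚ) + 1) * Nat.choose (2 * m + 2) (m + 1)
        = 2 * (2 * m + 1) * Nat.choose (2 * m) m := by exact_mod_cast choose_rec m
    have h2 : (2 * (m + 1)) = 2 * m + 2 := by ring
    rw [h2]
    have h4 : (4 : ℚ) ^ m ≠ 0 := by positivity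
    field_simp
    push_cast
    linear_combination (-2 * (4:ℚ) ^ m) * h

lemma abin_rec (m : ℕ) :
    (m : ℚ) * abin m = (1 / 2) * ∑ j ∈ Finset.range m, abin j := by
  rw [abin_sum]; ring

lemma ones_rec (m : ℕ) :
    (m : ℚ) * (fun _ : ℕ => (1:ℚ)) m = 1 * ∑ j ∈ Finset.range m, (fun _ : ℕ => (1:ℚ)) j := by
  simp


lemma univ_sum_count {n : ℕ} (s : Multiset (Fin n)) :
    ∑ i : Fin n, Multiset.count i s = Multiset.card s :=
  Multiset.sum_count_eq_card (fun a _ => mem_univ a)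

lemma univ_sum_replicate_count {n : ℕ} (s : Multiset (Fin n)) :
    ∑ i : Fin n, Multiset.replicate (Multiset.count i s) i = s := by
  simp_rw [← Multiset.nsmul_singleton]
  conv_rhs => rw [← Multiset.toFinset_sum_count_nsmul_eq s]
  apply (Finset.sum_subset (Finset.subset_univ s.toFinset) _).symm
  intro x _ hx
  rw [Multiset.count_eq_zero_of_notMem (by simpa using hx), zero_smul]

lemma count_sum_replicate {n : ℕ} (k : Fin n → ℕ) (j : Fin n) :
    Multiset.count j (∑ i : Fin n, Multiset.replicate (k i) i) = k j := by
  rw [Multiset.count_sum']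
  simp_rw [Multiset.count_replicate]
  rw [Finset.sum_ite_eq' Finset.univ j k]
  simp

lemma hsymm_eq_Pgen (n q : ℕ) :
    hsymm (Fin n) ℚ q = Pgen n (fun _ => (1:ℚ)) q := by
  classical
  unfold hsymm Pgen
  simp only [Finset.prod_const_one, map_one, one_mul]
  apply Finset.sum_bij' (i := fun (s : Sym (Fin n) q) _ => fun i => Multiset.count i s.1)
    (j := fun (k : Fin n → ℕ) (hk : k ∈ Finset.Nat.antidiagonalTuple n q) =>
      (⟨∑ i : Fin n, Multiset.replicate (k i) i, by
        rw [Multiset.card_sum]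
        simpa using Finset.Nat.mem_antidiagonalTuple.mp hk⟩ : Sym (Fin n) q))
  · intro k _; exact mem_univ _
  · intro s _
    exact Subtype.ext (univ_sum_replicate_count s.1)
  · intro k hk
    funext j
    exact count_sum_replicate k j
  · intro s _
    rw [Finset.prod_multiset_map_count]
    apply Finset.prod_subset (Finset.subset_univ _)
    intro x _ hx
    rw [Multiset.count_eq_zero_of_notMem (by simpa using hx), pow_zero]
  · intro s _
    rw [Finset.Nat.mem_antidiagonalTuple, univ_sum_count]
    exact s.2

/-- The monomial symmetric polynomial `m_λ` in `n` variables over `ℚ`: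
the sum of all distinct monomials whose multiset of nonzero exponents equals
the parts of the partition `λ`. -/
noncomputable def msym (n p : ℕ) (lam : Nat.Partition p) : MvPolynomial (Fin n) ℚ :=
  ∑ k ∈ (Finset.Nat.antidiagonalTuple n p).filter
      (fun k => (Finset.univ.val.map k).filter (fun m => 0 < m) = lam.parts),
    ∏ i, X i ^ k i

noncomputable def gpart (n p : ℕ) (k : Fin n → ℕ) : Nat.Partition p :=
  if h : k ∈ Finset.Nat.antidiagonalTuple n p then
    { parts := (Finset.univ.val.map k).filter (fun m => 0 < m)
      parts_pos := fun hm => (Multiset.mem_filter.mp hm).2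
      parts_sum := by
        have hadd := Multiset.filter_add_not (fun m => 0 < m) (Finset.univ.val.map k)
        have hz : ((Finset.univ.val.map k).filter (fun m => ¬ 0 < m)).sum = 0 := by
          apply Multiset.sum_eq_zero
          intro m hm
          have := (Multiset.mem_filter.mp hm).2
          omega
        have hsum : (Finset.univ.val.map k).sum = p := by
          rw [← Finset.sum_eq_multiset_sum]
          exact Finset.Nat.mem_antidiagonalTuple.mp h
        have := congrArg Multiset.sum hadd
        rw [Multiset.sum_add, hz, add_zero] at this
        rw [this, hsum] }
  else Nat.Partition.indiscrete p

lemma parts_prod_eq {n p : ℕ} (lam : Nat.Partition p) (k : Fin n → ℕ)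
    (hfk : (Finset.univ.val.map k).filter (fun m => 0 < m) = lam.parts) :
    (lam.parts.map fun m => (Nat.choose (2 * m) m : ℚ)).prod
      = ∏ i, (Nat.choose (2 * k i) (k i) : ℚ) := by
  rw [← hfk, Finset.prod_eq_multiset_prod,
    show (fun i => ((2 * k i).choose (k i) : ℚ)) = ((fun m => ((2 * m).choose m : ℚ)) ∘ k)
      from rfl, ← Multiset.map_map]
  set f : ℕ → ℚ := fun m => (Nat.choose (2 * m) m : ℚ) with hf
  have hadd := Multiset.filter_add_not (fun m => 0 < m) (Finset.univ.val.map k)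
  conv_rhs => rw [← hadd]
  rw [Multiset.map_add, Multiset.prod_add]
  have hone : (((Finset.univ.val.map k).filter (fun m => ¬ 0 < m)).map f).prod = 1 := by
    apply Multiset.prod_eq_one
    intro x hx
    obtain ⟨m, hm, rfl⟩ := Multiset.mem_map.mp hx
    have hm0 : m = 0 := by have := (Multiset.mem_filter.mp hm).2; omega
    simp [hf, hm0]
  rw [hone, mul_one]

lemma regroup (n p : ℕ) :
    ∑ lam : Nat.Partition p,
      C ((lam.parts.map fun m => (Nat.choose (2 * m) m : ℚ)).prod) * msym n p lam
    = ∑ k ∈ Finset.Nat.antidiagonalTuple n p,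
        C (∏ i, (Nat.choose (2 * k i) (k i) : ℚ)) * ∏ i, X i ^ k i := by
  classical
  unfold msym
  simp_rw [Finset.mul_sum]
  have hstep : ∀ lam : Nat.Partition p,
      ∑ k ∈ (Finset.Nat.antidiagonalTuple n p).filter
          (fun k => (Finset.univ.val.map k).filter (fun m => 0 < m) = lam.parts),
        C ((lam.parts.map fun m => (Nat.choose (2 * m) m : ℚ)).prod) * ∏ i, X i ^ k i
      = ∑ k ∈ (Finset.Nat.antidiagonalTuple n p).filter (fun k => gpart n p k = lam),
        C (∏ i, (Nat.choose (2 * k i) (k i) : ℚ)) * ∏ i, X i ^ k i := by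
    intro lam
    rw [Finset.sum_congr]
    · apply Finset.filter_congr
      intro k hk
      unfold gpart
      rw [dif_pos hk]
      constructor
      · intro h
        exact Nat.Partition.ext h
      · intro h
        rw [← h]
    · intro k hk
      rw [Finset.mem_filter] at hk
      have h2 : (Finset.univ.val.map k).filter (fun m => 0 < m) = lam.parts := by
        have := hk.2
        unfold gpart at this
        rw [dif_pos hk.1] at this
        rw [← this]
      rw [parts_prod_eq lam k h2]
  rw [Finset.sum_congr rfl (fun lam _ => hstep lam)]
  rw [Finset.sum_fiberwise_eq_sum_filter]
  congr 1
  apply Finset.filter_true_of_mem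
  intro _ _
  exact Finset.mem_univ _


lemma Pgen_zero (n : ℕ) (a : ℕ → ℚ) (ha : a 0 = 1) : Pgen n a 0 = 1 := by
  unfold Pgen
  rw [Finset.Nat.antidiagonalTuple_zero_right, Finset.sum_singleton]
  simp [ha]

/-- If `θ` is the algebra endomorphism of symmetric functions determined by
`θ(p_k) = p_k/2` on power sums (the automorphism `θ_{1/2}`), then
`(p!/2^p) ∑_{λ⊢p} (∏_{k∈λ} C(2k,k)) m_λ = 2^p p! · θ(h_p)`. -/
theorem monomial_expansion_eq_theta_half_hsymm (n p : ℕ)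
    (θ : MvPolynomial (Fin n) ℚ →ₐ[ℚ] MvPolynomial (Fin n) ℚ)
    (hθ : ∀ k, 1 ≤ k → k ≤ p →
      θ (psum (Fin n) ℚ k) = C (1 / 2 : ℚ) * psum (Fin n) ℚ k) :
    C ((p.factorial : ℚ) / 2 ^ p) *
        ∑ lam : Nat.Partition p,
          C ((lam.parts.map fun k => (Nat.choose (2 * k) k : ℚ)).prod) * msym n p lam
      = C ((2 ^ p * p.factorial : ℕ) : ℚ) * θ (hsymm (Fin n) ℚ p) := by
  classical
  have hC : ∀ a : ℚ, θ (C a) = C a := by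
    intro a
    rw [← MvPolynomial.algebraMap_eq]
    exact θ.commutes a
  have key : ∀ q, q ≤ p → θ (hsymm (Fin n) ℚ q) = Pgen n abin q := by
    intro q
    induction q using Nat.strong_induction_on with
    | _ q ih =>
      intro hq
      rcases Nat.eq_zero_or_pos q with rfl | hq0
      · rw [hsymm_zero, map_one, Pgen_zero]
        simp [abin]
      · have h1 := Pgen_rec n (fun _ => 1) 1 ones_rec q
        have h2 := Pgen_rec n abin (1/2) abin_rec q
        rw [map_one, one_mul] at h1
        have newton : C (q : ℚ) * hsymm (Fin n) ℚ q
            = ∑ i ∈ Finset.Icc 1 q, psum (Fin n) ℚ i * hsymm (Fin n) ℚ (q - i) := by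
          rw [hsymm_eq_Pgen n q, h1]
          apply Finset.sum_congr rfl
          intro i _
          rw [hsymm_eq_Pgen]
        have happ := congrArg θ newton
        rw [map_mul, hC, map_sum] at happ
        have hterm : ∀ i ∈ Finset.Icc 1 q,
            θ (psum (Fin n) ℚ i * hsymm (Fin n) ℚ (q - i))
              = C (1/2 : ℚ) * (psum (Fin n) ℚ i * Pgen n abin (q - i)) := by
          intro i hi
          rw [Finset.mem_Icc] at hi
          rw [map_mul, hθ i hi.1 (le_trans hi.2 hq),
            ih (q - i) (by omega) (by omega), mul_assoc]
        rw [Finset.sum_congr rfl hterm, ← Finset.mul_sum, ← h2] at happ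
        have hCq : (C (q : ℚ) : MvPolynomial (Fin n) ℚ) ≠ 0 := by
          simp only [ne_eq, MvPolynomial.C_eq_zero, Nat.cast_eq_zero]
          omega
        exact mul_left_cancel₀ hCq happ
  rw [key p le_rfl, regroup n p]
  unfold Pgen
  rw [Finset.mul_sum, Finset.mul_sum]
  apply Finset.sum_congr rfl
  intro k hk
  have hks : ∑ i, k i = p := Finset.Nat.mem_antidiagonalTuple.mp hk
  have habin : ∏ i, abin (k i)
      = (∏ i, (Nat.choose (2 * k i) (k i) : ℚ)) / 4 ^ p := by
    unfold abin
    rw [Finset.prod_div_distrib, Finset.prod_pow_eq_pow_sum, hks]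
  rw [← mul_assoc, ← mul_assoc, ← C_mul, ← C_mul, habin]
  congr 2
  have h4 : (4 : ℚ) ^ p = 2 ^ p * 2 ^ p := by
    rw [← mul_pow]; norm_num
  have h2 : (2 : ℚ) ^ p ≠ 0 := by positivity
  field_simp [h4]
  push_cast
  rw [h4]
  ring
end

section
/- For p a nonnegative integer and positive reals s_1, s_2, (1/2π)∫_0^{2π} (s_1 cos²θ + s_2 sin²θ)^p dθ = (1/4^p) ∑_{k=0}^p binomial(2k,k) binomial(2p-2k,p-k) s_1^k s_2^{p-k}. -/
open Real

/-! Expand the power binomially. The even mixed moments of `cos` and `sin` over a period satisfy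
`C(m+n, m) ∫₀^{2π} cos^{2m} sin^{2n} = 2π C(2m, m) C(2n, n) / 4^{m+n}`: for `n = 0` this is Wallis'
formula, and integrating the derivative of `sin^{2n+1} cos^{2m+1}` over a period gives
`(2n+1) ∫ cos^{2m+2} sin^{2n} = (2m+1) ∫ cos^{2m} sin^{2n+2}`, which moves one factor from `cos²`
to `sin²`. -/

theorem integral_cos_pow_even_two_pi (m : ℕ) :
    ∫ θ in (0 : ℝ)..2 * π, cos θ ^ (2 * m) = 2 * π * m.centralBinom / 4 ^ m := by
  induction m with
  | zero => simp
  | succ m ih =>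
    have hcb : ((m + 1 : ℕ) : ℝ) * (m + 1).centralBinom = 2 * (2 * m + 1) * m.centralBinom := by
      exact_mod_cast Nat.succ_mul_centralBinom_succ m
    rw [show 2 * (m + 1) = 2 * m + 2 by ring, integral_cos_pow, ih]
    simp only [cos_two_pi, sin_two_pi, sin_zero, mul_zero, sub_zero, zero_div, zero_add]
    push_cast at hcb ⊢
    field_simp
    rw [pow_succ]
    linear_combination (-2 * 4 ^ m : ℝ) * hcb

theorem integral_cos_pow_even_mul_sin_pow_even_two_pi_recurrence (m n : ℕ) :
    (2 * n + 1 : ℝ) * ∫ θ in (0 : ℝ)..2 * π, cos θ ^ (2 * (m + 1)) * sin θ ^ (2 * n)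
      = (2 * m + 1) * ∫ θ in (0 : ℝ)..2 * π, cos θ ^ (2 * m) * sin θ ^ (2 * (n + 1)) := by
  have hderiv (θ : ℝ) : HasDerivAt (fun θ => sin θ ^ (2 * n + 1) * cos θ ^ (2 * m + 1))
      ((2 * n + 1) * (cos θ ^ (2 * (m + 1)) * sin θ ^ (2 * n))
        - (2 * m + 1) * (cos θ ^ (2 * m) * sin θ ^ (2 * (n + 1)))) θ := by
    refine (((hasDerivAt_sin θ).fun_pow _).fun_mul ((hasDerivAt_cos θ).fun_pow _)).congr_deriv ?_
    simp only [Nat.add_sub_cancel]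
    push_cast
    ring
  have hftc := intervalIntegral.integral_eq_sub_of_hasDerivAt (a := 0) (b := 2 * π)
    (fun θ _ => hderiv θ) (by apply Continuous.intervalIntegrable; fun_prop)
  rw [intervalIntegral.integral_sub (by apply Continuous.intervalIntegrable; fun_prop)
    (by apply Continuous.intervalIntegrable; fun_prop), intervalIntegral.integral_const_mul,
    intervalIntegral.integral_const_mul] at hftc
  simp only [sin_two_pi, sin_zero, zero_pow (Nat.succ_ne_zero _), zero_mul, sub_self] at hftc
  exact sub_eq_zero.mp hftc

theorem choose_mul_integral_cos_pow_even_mul_sin_pow_even_two_pi (m n : ℕ) :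
    ((m + n).choose m : ℝ) * ∫ θ in (0 : ℝ)..2 * π, cos θ ^ (2 * m) * sin θ ^ (2 * n)
      = 2 * π * m.centralBinom * n.centralBinom / 4 ^ (m + n) := by
  induction n generalizing m with
  | zero => simp [integral_cos_pow_even_two_pi]
  | succ n ih =>
    have hprev := ih (m + 1)
    have hstep := integral_cos_pow_even_mul_sin_pow_even_two_pi_recurrence m n
    have hchoose :
        ((m + 1 + n).choose (m + 1) : ℝ) * (m + 1) = (m + (n + 1)).choose m * (n + 1) := by
      have h := Nat.choose_succ_right_eq (m + n + 1) m
      rw [show m + n + 1 - m = n + 1 by omega] at h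
      rw [show m + 1 + n = m + n + 1 by omega, show m + (n + 1) = m + n + 1 by omega]
      exact_mod_cast h
    have hcm : ((m + 1 : ℕ) : ℝ) * (m + 1).centralBinom = 2 * (2 * m + 1) * m.centralBinom := by
      exact_mod_cast Nat.succ_mul_centralBinom_succ m
    have hcn : ((n + 1 : ℕ) : ℝ) * (n + 1).centralBinom = 2 * (2 * n + 1) * n.centralBinom := by
      exact_mod_cast Nat.succ_mul_centralBinom_succ n
    rw [show m + 1 + n = m + (n + 1) by omega] at hprev hchoose
    push_cast at hcm hcn
    refine mul_left_cancel₀ (show (2 * m + 1 : ℝ) * (m + 1) * (n + 1) ≠ 0 by positivity) ?_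
    set Y := ∫ θ in (0 : ℝ)..2 * π, cos θ ^ (2 * (m + 1)) * sin θ ^ (2 * n)
    set K : ℝ := 4 ^ (m + (n + 1))
    linear_combination (-(m + 1) * (n + 1) * ((m + (n + 1)).choose m : ℝ)) * hstep
      - (m + 1) * (2 * n + 1) * Y * hchoose + (m + 1) ^ 2 * (2 * n + 1) * hprev
      + (m + 1) * (2 * n + 1) * 2 * π * n.centralBinom / K * hcm
      - (m + 1) * (2 * m + 1) * 2 * π * m.centralBinom / K * hcn

theorem integral_mul_cos_sq_add_mul_sin_sq_pow_two_pi (a b : ℝ) (p : ℕ) :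
    ∫ θ in (0 : ℝ)..2 * π, (a * cos θ ^ 2 + b * sin θ ^ 2) ^ p
      = ∑ k ∈ Finset.range (p + 1), a ^ k * b ^ (p - k) * p.choose k
          * ∫ θ in (0 : ℝ)..2 * π, cos θ ^ (2 * k) * sin θ ^ (2 * (p - k)) := by
  simp_rw [add_pow, mul_pow, ← pow_mul]
  rw [intervalIntegral.integral_finsetSum fun k _ => by
    apply Continuous.intervalIntegrable; fun_prop]
  refine Finset.sum_congr rfl fun k _ => ?_
  rw [← intervalIntegral.integral_const_mul]
  congr 1 with θ
  ring

theorem circle_average_pow_general (p : ℕ) (s₁ s₂ : ℝ) :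
    (1 / (2 * π)) * ∫ θ in (0 : ℝ)..(2 * π),
        (s₁ * cos θ ^ 2 + s₂ * sin θ ^ 2) ^ p
      = (1 / 4 ^ p) * ∑ k ∈ Finset.range (p + 1),
          (Nat.choose (2 * k) k : ℝ) * Nat.choose (2 * (p - k)) (p - k)
            * s₁ ^ k * s₂ ^ (p - k) := by
  rw [integral_mul_cos_sq_add_mul_sin_sq_pow_two_pi, Finset.mul_sum, Finset.mul_sum]
  refine Finset.sum_congr rfl fun k hk => ?_
  have hmoment := choose_mul_integral_cos_pow_even_mul_sin_pow_even_two_pi k (p - k)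
  rw [Nat.add_sub_cancel' (Finset.mem_range_succ_iff.mp hk)] at hmoment
  rw [mul_assoc _ (p.choose k : ℝ), hmoment, ← Nat.centralBinom_eq_two_mul_choose,
    ← Nat.centralBinom_eq_two_mul_choose]
  field_simp

/-- Two-dimensional generalized tight `p`-frame identity for `O(2)`:
`(1/2π) ∫₀^{2π} (s₁cos²θ + s₂sin²θ)^p dθ
  = 4^{-p} ∑_{k=0}^p C(2k,k) C(2p-2k,p-k) s₁^k s₂^{p-k}`. -/
theorem circle_average_pow (p : ℕ) (s₁ s₂ : ℝ) (hs₁ : 0 < s₁) (hs₂ : 0 < s₂) :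
    (1 / (2 * π)) * ∫ θ in (0 : ℝ)..(2 * π),
        (s₁ * cos θ ^ 2 + s₂ * sin θ ^ 2) ^ p
      = (1 / 4 ^ p) * ∑ k ∈ Finset.range (p + 1),
          (Nat.choose (2 * k) k : ℝ) * Nat.choose (2 * (p - k)) (p - k)
            * s₁ ^ k * s₂ ^ (p - k) :=
  circle_average_pow_general p s₁ s₂
end

section
/- Let Ω ⊂ R^d be a bounded measurable set whose isometry group G (finite subgroup of O(d) fixing Ω) satisfies the tight p-frame identity (1/|G|)∑_{U∈G}|TUx|^{2p} = F_p(s²(T))|x|^{2p} for all matrices T and x ∈ R^d. Then for any invertible linear map T, the polar moment I_{2p}(T(Ω)) := ∫_{T(Ω)} |x|^{2p} dx satisfies I_{2p}(T(Ω)) = |det T| · F_p(s²(T)) · I_{2p}(Ω). -/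
open Matrix MeasureTheory

/-! Change variables `x = T y`, which contributes the Jacobian `|det T|`. Each `U ∈ G` is
orthogonal and maps `Ω` onto itself, so `∫_Ω |T y|^{2p} = ∫_Ω |T U y|^{2p}`; averaging this over
`G` inside the integral and applying the frame identity pointwise turns the integrand into
`F_p(T) |y|^{2p}`. -/

theorem Continuous.integrableOn_of_isBounded {X E : Type*} [MetricSpace X] [ProperSpace X]
    [MeasurableSpace X] [OpensMeasurableSpace X] [NormedAddCommGroup E] {μ : Measure X}
    [IsFiniteMeasureOnCompacts μ] {g : X → E} (hg : Continuous g) {s : Set X}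
    (hs : Bornology.IsBounded s) : IntegrableOn g s μ :=
  (hg.continuousOn.integrableOn_compact hs.isCompact_closure).mono_set subset_closure

theorem abs_det_eq_one_of_mul_transpose_eq_one {ι : Type*} [Fintype ι] [DecidableEq ι]
    {U : Matrix ι ι ℝ} (hU : U * Uᵀ = 1) : |U.det| = 1 := by
  have h : U.det * U.det = 1 := by
    simpa only [det_mul, det_transpose, det_one] using congrArg det hU
  rcases mul_self_eq_one_iff.mp h with h1 | h1 <;> simp [h1]

section ChangeOfVariables

variable {ι E : Type*} [Fintype ι] [DecidableEq ι] [NormedAddCommGroup E] [NormedSpace ℝ E]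

theorem setIntegral_image_mulVec {A : Matrix ι ι ℝ} (hA : A.det ≠ 0) (s : Set (ι → ℝ))
    (g : (ι → ℝ) → E) :
    ∫ x in A.mulVec '' s, g x = |A.det| • ∫ y in s, g (A.mulVec y) := by
  have hf : LinearMap.det (toLin' A) ≠ 0 := by rwa [LinearMap.det_toLin']
  let e := ((toLin' A).equivOfDetNeZero hf).toContinuousLinearEquiv.toHomeomorph.toMeasurableEquiv
  have he : ⇑e = A.mulVec := rfl
  have hmap : Measure.map e volume = ENNReal.ofReal |A.det⁻¹| • volume := by
    rw [← LinearMap.det_toLin']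
    exact Measure.map_linearMap_addHaar_eq_smul_addHaar volume hf
  have hcov := (MeasurePreserving.mk e.measurable hmap).setIntegral_image_emb
    e.measurableEmbedding g s
  rw [Measure.restrict_smul, integral_smul_measure, ENNReal.toReal_ofReal (abs_nonneg _),
    he] at hcov
  rw [← hcov, smul_smul, ← abs_mul, mul_inv_cancel₀ hA, abs_one, one_smul]

theorem setIntegral_comp_mulVec_of_image_eq {U : Matrix ι ι ℝ} (hU : |U.det| = 1)
    {s : Set (ι → ℝ)} (hUs : U.mulVec '' s = s) (g : (ι → ℝ) → E) :
    ∫ y in s, g (U.mulVec y) = ∫ y in s, g y := by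
  have hcov := setIntegral_image_mulVec (abs_ne_zero.mp (hU.trans_ne one_ne_zero)) s g
  rw [hUs, hU, one_smul] at hcov
  exact hcov.symm

end ChangeOfVariables

theorem moment_of_mass_transform_general (d p : ℕ)
    (Ω : Set (Fin d → ℝ)) (hbd : Bornology.IsBounded Ω)
    (G : Finset (Matrix (Fin d) (Fin d) ℝ)) (hGne : G.Nonempty)
    (horth : ∀ U ∈ G, U * Uᵀ = 1)
    (hinv : ∀ U ∈ G, U.mulVec '' Ω = Ω)
    (Fp : Matrix (Fin d) (Fin d) ℝ → ℝ)
    (hframe : ∀ (S : Matrix (Fin d) (Fin d) ℝ) (x : Fin d → ℝ),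
      (1 / (G.card : ℝ)) * ∑ U ∈ G, (∑ i, (S.mulVec (U.mulVec x) i) ^ 2) ^ p
        = Fp S * (∑ i, x i ^ 2) ^ p)
    (T : Matrix (Fin d) (Fin d) ℝ) (hT : IsUnit T.det) :
    ∫ x in T.mulVec '' Ω, (∑ i, x i ^ 2) ^ p
      = |T.det| * Fp T * ∫ x in Ω, (∑ i, x i ^ 2) ^ p := by
  have hG : (G.card : ℝ) ≠ 0 := by exact_mod_cast hGne.card_pos.ne'
  have hinvariant : ∀ U ∈ G, ∫ y in Ω, (∑ i, (T *ᵥ (U *ᵥ y)) i ^ 2) ^ p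
      = ∫ y in Ω, (∑ i, (T *ᵥ y) i ^ 2) ^ p := fun U hU =>
    setIntegral_comp_mulVec_of_image_eq (abs_det_eq_one_of_mul_transpose_eq_one (horth U hU))
      (hinv U hU) (fun x => (∑ i, (T *ᵥ x) i ^ 2) ^ p)
  have hintegrable : ∀ U ∈ G, IntegrableOn (fun y => (∑ i, (T *ᵥ (U *ᵥ y)) i ^ 2) ^ p) Ω :=
    fun U _ => (by fun_prop : Continuous _).integrableOn_of_isBounded hbd
  have haverage : ∫ y in Ω, (∑ i, (T *ᵥ y) i ^ 2) ^ p
      = ∫ y in Ω, (1 / (G.card : ℝ)) * ∑ U ∈ G, (∑ i, (T *ᵥ (U *ᵥ y)) i ^ 2) ^ p := by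
    rw [integral_const_mul, integral_finsetSum G hintegrable, Finset.sum_congr rfl hinvariant,
      Finset.sum_const, nsmul_eq_mul]
    field_simp
  rw [setIntegral_image_mulVec hT.ne_zero, haverage]
  simp_rw [hframe]
  rw [integral_const_mul, smul_eq_mul, mul_assoc]

/-- If the (finite, orthogonal) isometry group `G` of a bounded measurable set
`Ω ⊂ ℝ^d` satisfies the tight `p`-frame identity
`(1/|G|)∑_{U∈G}|SUx|^{2p} = F_p(S)|x|^{2p}` for all matrices `S` and vectors
`x`, then for any invertible linear map `T` the polar moment of mass satisfies
`I_{2p}(T(Ω)) = |det T| · F_p(T) · I_{2p}(Ω)`. -/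
theorem moment_of_mass_transform (d p : ℕ) (hd : 0 < d)
    (Ω : Set (Fin d → ℝ)) (hbd : Bornology.IsBounded Ω) (hΩ : MeasurableSet Ω)
    (G : Finset (Matrix (Fin d) (Fin d) ℝ)) (hGne : G.Nonempty)
    (horth : ∀ U ∈ G, U * Uᵀ = 1)
    (hmul : ∀ U ∈ G, ∀ V ∈ G, U * V ∈ G)
    (hinv : ∀ U ∈ G, U.mulVec '' Ω = Ω)
    (Fp : Matrix (Fin d) (Fin d) ℝ → ℝ)
    (hframe : ∀ (S : Matrix (Fin d) (Fin d) ℝ) (x : Fin d → ℝ),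
      (1 / (G.card : ℝ)) * ∑ U ∈ G, (∑ i, (S.mulVec (U.mulVec x) i) ^ 2) ^ p
        = Fp S * (∑ i, x i ^ 2) ^ p)
    (T : Matrix (Fin d) (Fin d) ℝ) (hT : IsUnit T.det) :
    ∫ x in T.mulVec '' Ω, (∑ i, x i ^ 2) ^ p
      = |T.det| * Fp T * ∫ x in Ω, (∑ i, x i ^ 2) ^ p :=
  moment_of_mass_transform_general d p Ω hbd G hGne horth hinv Fp hframe T hT
end
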